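/- Let G be a group and A a commutative unital ring. A derivation d of A[G] is weakly inner, i.e. (d v̂)(u) = 0 for all u, v ∈ G with uv = vu, if and only if its character is potential, i.e. there exists a function p : G → A such that (d v̂)(u) = p(uv⁻¹) − p(v⁻¹u) for all u, v ∈ G. -/

import Mathlib

/-!
Put `f u v := (d v̂)(u)`. Writing `x = u v⁻¹` and `g = v⁻¹`, the Leibniz rule on `ĝ ĥ` says
exactly that `c g x := f (x g⁻¹) g⁻¹` is a 1-cocycle on the action groupoid of `G` acting on
itself by conjugation, and weak innerness says that `c` vanishes on the stabilisers. Such a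
cocycle is a coboundary: fix a representative of every conjugacy class and a conjugator
`t x` carrying `x` to it, and take `p x := c (t x) x`. The converse holds because `u v⁻¹ = v⁻¹ u`
whenever `u` and `v` commute.
-/

open MonoidAlgebra

/-- `d` is a derivation of the group ring `A[G]`: an `A`-linear endomorphism
satisfying the Leibniz rule. -/
def IsGroupRingDerivation {A G : Type} [CommRing A] [Group G]
    (d : MonoidAlgebra A G →ₗ[A] MonoidAlgebra A G) : Prop :=
  ∀ x y : MonoidAlgebra A G, d (x * y) = d x * y + x * d y

/-- `d` is an inner derivation of `A[G]`: `d x = a*x - x*a` for some `a ∈ A[G]`. -/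
def IsInnerDerivation {A G : Type} [CommRing A] [Group G]
    (d : MonoidAlgebra A G →ₗ[A] MonoidAlgebra A G) : Prop :=
  ∃ a : MonoidAlgebra A G, ∀ x : MonoidAlgebra A G, d x = a * x - x * a

/-- `d` is weakly inner: the coefficient of `h` in `d ĝ` vanishes whenever `g` and `h`
commute (the character of `d` is trivial on loops). -/
def IsWeaklyInnerDerivation {A G : Type} [CommRing A] [Group G]
    (d : MonoidAlgebra A G →ₗ[A] MonoidAlgebra A G) : Prop :=
  ∀ g h : G, g * h = h * g → (d (MonoidAlgebra.of A G g)).coeff h = 0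

open ConjAct

theorem MulAction.exists_eq_sub_smul_of_cocycle {G X A : Type*} [Group G] [MulAction G X]
    [AddCommGroup A] (c : G → X → A) (hc : ∀ g h x, c (g * h) x = c h x + c g (h • x))
    (hstab : ∀ g x, g • x = x → c g x = 0) :
    ∃ p : X → A, ∀ g x, c g x = p x - p (g • x) := by
  have hrep : ∀ x : X, ∃ t : G, t • x = (⟦x⟧ : orbitRel.Quotient G X).out := fun x =>
    orbitRel_apply.mp (Quotient.exact (Quotient.out_eq _))
  choose t ht using hrep
  refine ⟨fun x => c (t x) x, fun g x => ?_⟩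
  have hsame : (⟦g • x⟧ : orbitRel.Quotient G X) = ⟦x⟧ := Quotient.sound (mem_orbit x g)
  let s := t (g • x) * g * (t x)⁻¹
  have hs : s • (t x • x) = t x • x := by
    rw [smul_smul, inv_mul_cancel_right, mul_smul, ht, ht, hsame]
  have h1 := hc (t (g • x)) g x
  have h2 := hc s (t x) x
  rw [inv_mul_cancel_right, hstab s _ hs, add_zero] at h2
  show c g x = c (t x) x - c (t (g • x)) (g • x)
  rw [← h2, h1, add_sub_cancel_right]

section GroupRing

variable {A G : Type} [CommRing A] [Group G] {d : MonoidAlgebra A G →ₗ[A] MonoidAlgebra A G}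

theorem IsGroupRingDerivation.coeff_of_mul (hd : IsGroupRingDerivation d) (g h u : G) :
    (d (of A G (g * h))).coeff u =
      (d (of A G g)).coeff (u * h⁻¹) + (d (of A G h)).coeff (g⁻¹ * u) := by
  rw [map_mul, hd]
  simp [of_apply]

variable (d) in
noncomputable def conjCocycle (g : ConjAct G) (x : G) : A :=
  (d (of A G (ofConjAct g)⁻¹)).coeff (x * (ofConjAct g)⁻¹)

theorem IsGroupRingDerivation.conjCocycle_mul (hd : IsGroupRingDerivation d)
    (g h : ConjAct G) (x : G) :
    conjCocycle d (g * h) x = conjCocycle d h x + conjCocycle d g (h • x) := by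
  simp only [conjCocycle, ofConjAct_mul, mul_inv_rev, hd.coeff_of_mul, smul_def, inv_inv,
    mul_assoc, inv_mul_cancel, mul_one]

theorem IsWeaklyInnerDerivation.conjCocycle_eq_zero (hw : IsWeaklyInnerDerivation d)
    {g : ConjAct G} {x : G} (hgx : g • x = x) : conjCocycle d g x = 0 := by
  have hcomm : Commute (ofConjAct g) x := by
    rwa [smul_def, mul_inv_eq_iff_eq_mul] at hgx
  exact hw _ _ (hcomm.inv_left.mul_right (Commute.refl _))

theorem conjCocycle_toConjAct_inv (u v : G) :
    conjCocycle d (toConjAct v⁻¹) (u * v⁻¹) = (d (of A G v)).coeff u := by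
  simp [conjCocycle]

end GroupRing

theorem weakly_inner_iff_potential
    (A G : Type) [CommRing A] [Group G]
    (d : MonoidAlgebra A G →ₗ[A] MonoidAlgebra A G)
    (hd : IsGroupRingDerivation d) :
    IsWeaklyInnerDerivation d ↔
      ∃ p : G → A, ∀ u v : G,
        (d (MonoidAlgebra.of A G v)).coeff u = p (u * v⁻¹) - p (v⁻¹ * u) := by
  constructor
  · intro hw
    obtain ⟨p, hp⟩ := MulAction.exists_eq_sub_smul_of_cocycle (conjCocycle d)
      hd.conjCocycle_mul fun _ _ => hw.conjCocycle_eq_zero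
    refine ⟨p, fun u v => ?_⟩
    rw [← conjCocycle_toConjAct_inv, hp, toConjAct_smul, inv_inv, mul_assoc, inv_mul_cancel_right]
  · rintro ⟨p, hp⟩ g h hgh
    rw [hp, ← (Commute.inv_left hgh).eq, sub_self]
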